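/- (Theorem 1, part 2.) Let the partition encoded by π with matrices L, L̄ be a control equivalence for A ∈ ℝ^{N×N}, let B have unit-vector columns given by an injective driver map d, let m ≤ M componentwise, and let F, R be costs constant on the partition with induced reduced costs F̂, R̂. Let (û, ẑ) be a reduced admissible pair from L·x0 for some x0 ∈ ℝ^N. Define u : ℝ → ℝ^K by u_l(t) = m_l + ((M_l − m_l)/(M̂_i − m̂_i))·(û_i(t) − m̂_i) with i = π(d l) when m̂_i < M̂_i, and u_l(t) = m_l otherwise. Then u is measurable, u(t) ∈ [m;M] for all t, (L·B)·u(t) = û(t) for all t, and for the trajectory x of the original system from x0 under u one has L·x(t) = ẑ(t) for all t ≥ 0 and J_u(x0,T) = Ĵ_û(L·x0,T) for every T ≥ 0. -/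

import Mathlib

/-!
The disaggregated control gives every driver of block `i` the same fraction of its range
`[m l, M l]`, so it is admissible and its block sums reproduce `û`, i.e. `L·B·u = û`. Since
`L·A = Â·L`, the lumped state `L·x` solves the same linear integral equation as `ẑ`, and such
solutions are unique: the difference `g` satisfies `g = ∫ Â g`, whose right-hand side is a `C¹`
solution of `φ' = Â φ`, `φ 0 = 0`. The costs then agree because `F` and `R` factor through
`L·x` and `L·B·u`.
-/

open Matrix MeasureTheory

/-- Aggregation matrix of the partition encoded by `π`. -/
noncomputable def aggL {N n : ℕ} (π : Fin N → Fin n) : Matrix (Fin n) (Fin N) ℝ :=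
  fun i j => if π j = i then 1 else 0

/-- Averaging matrix of the partition encoded by `π`. -/
noncomputable def avgL {N n : ℕ} (π : Fin N → Fin n) : Matrix (Fin N) (Fin n) ℝ :=
  fun j i => if π j = i then
    (1 : ℝ) / (Finset.univ.filter (fun j' : Fin N => π j' = i)).card else 0

/-- Reduced lower bound `m̂ i = Σ_{l : π(d l) = i} m l`. -/
noncomputable def redBound {N n K : ℕ} (π : Fin N → Fin n) (d : Fin K → Fin N)
    (m : Fin K → ℝ) : Fin n → ℝ :=
  fun i => ∑ l ∈ Finset.univ.filter (fun l : Fin K => π (d l) = i), m l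

section Disaggregation

variable {ι κ : Type*} [Fintype κ] [DecidableEq ι]

noncomputable def fiberSum (g : κ → ι) (m : κ → ℝ) (i : ι) : ℝ :=
  ∑ l ∈ Finset.univ.filter (fun l => g l = i), m l

/-- Every `l` over `i` covers the same fraction `(v i - m̂ i) / (M̂ i - m̂ i)` of its range
`[m l, M l]` (with `m̂ = fiberSum g m`, `M̂ = fiberSum g M`), so the fibre sums add up to `v i`. -/
noncomputable def disaggregate (g : κ → ι) (m M : κ → ℝ) (v : ι → ℝ) (l : κ) : ℝ :=
  if fiberSum g m (g l) < fiberSum g M (g l) then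
    m l + (M l - m l) / (fiberSum g M (g l) - fiberSum g m (g l)) *
      (v (g l) - fiberSum g m (g l))
  else m l

variable (g : κ → ι) {m M : κ → ℝ}

lemma continuous_disaggregate (m M : κ → ℝ) : Continuous (disaggregate g m M) := by
  refine continuous_pi fun l => ?_
  unfold disaggregate
  split_ifs <;> fun_prop

lemma disaggregate_mem_Icc (hmM : m ≤ M) {v : ι → ℝ}
    (hv : v ∈ Set.Icc (fiberSum g m) (fiberSum g M)) :
    disaggregate g m M v ∈ Set.Icc m M := by
  suffices ∀ l, m l ≤ disaggregate g m M v l ∧ disaggregate g m M v l ≤ M l from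
    ⟨fun l => (this l).1, fun l => (this l).2⟩
  intro l
  unfold disaggregate
  split_ifs with hlt
  · set θ := (v (g l) - fiberSum g m (g l)) / (fiberSum g M (g l) - fiberSum g m (g l))
    have hθ0 : 0 ≤ θ := div_nonneg (sub_nonneg.2 (hv.1 (g l))) (sub_nonneg.2 hlt.le)
    have hθ1 : θ ≤ 1 := (div_le_one₀ (sub_pos.2 hlt)).2 (sub_le_sub_right (hv.2 (g l)) _)
    have hθ : (M l - m l) / (fiberSum g M (g l) - fiberSum g m (g l)) *
        (v (g l) - fiberSum g m (g l)) = (M l - m l) * θ := by ring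
    rw [hθ]
    have := hmM l
    constructor <;> nlinarith
  · exact ⟨le_rfl, hmM l⟩

lemma fiberSum_disaggregate {v : ι → ℝ}
    (hv : v ∈ Set.Icc (fiberSum g m) (fiberSum g M)) :
    fiberSum g (disaggregate g m M v) = v := by
  funext i
  have hfiber : ∀ l ∈ Finset.univ.filter (fun l => g l = i), disaggregate g m M v l =
      if fiberSum g m i < fiberSum g M i then
        m l + (M l - m l) / (fiberSum g M i - fiberSum g m i) * (v i - fiberSum g m i)
      else m l := by
    intro l hl
    obtain rfl := (Finset.mem_filter.1 hl).2
    rfl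
  rw [fiberSum, Finset.sum_congr rfl hfiber]
  split_ifs with hlt
  · have hgap : fiberSum g M i - fiberSum g m i ≠ 0 := (sub_pos.2 hlt).ne'
    rw [Finset.sum_add_distrib, ← Finset.sum_mul, ← Finset.sum_div, Finset.sum_sub_distrib]
    change fiberSum g m i + (fiberSum g M i - fiberSum g m i) / _ * _ = v i
    field_simp
    ring
  · exact (le_antisymm ((hv.2 i).trans (not_lt.1 hlt)) (hv.1 i)).symm

end Disaggregation

lemma aggL_mul_mulVec_of_unit_columns {N n K : ℕ} (π : Fin N → Fin n) {d : Fin K → Fin N}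
    {B : Matrix (Fin N) (Fin K) ℝ} (hB : ∀ j l, B j l = if j = d l then 1 else 0)
    (v : Fin K → ℝ) : (aggL π * B) *ᵥ v = fiberSum (π ∘ d) v := by
  funext i
  simp [Matrix.mulVec, dotProduct, Matrix.mul_apply, aggL, hB, fiberSum, Finset.sum_filter]

lemma Measurable.intervalIntegrable_of_mem_Icc {ι : Type*} [Fintype ι] {f : ℝ → ι → ℝ}
    (hf : Measurable f) {lo hi : ι → ℝ} (hbox : ∀ t, f t ∈ Set.Icc lo hi) (a b : ℝ) :
    IntervalIntegrable f volume a b := by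
  obtain ⟨C, hC⟩ := (Metric.isBounded_Icc lo hi).exists_norm_le
  exact intervalIntegrable_iff.2 <| Measure.integrableOn_of_bounded measure_Ioc_lt_top.ne
    hf.aestronglyMeasurable (M := C) (ae_of_all _ fun t => hC _ (hbox t))

section IntegralEquation

variable {E : Type*} [NormedAddCommGroup E] [NormedSpace ℝ E] [CompleteSpace E]

lemma eq_zero_of_eq_integral (f : E →L[ℝ] E) {g : ℝ → E} (hg : Continuous g)
    (hgeq : ∀ t, 0 ≤ t → g t = ∫ s in (0:ℝ)..t, f (g s)) : ∀ t, 0 ≤ t → g t = 0 := by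
  intro t ht
  -- `φ` is `C¹`, solves `φ' = f φ` on `[0, ∞)` (as `φ = g` there) and vanishes at `0`
  set φ : ℝ → E := fun τ => ∫ s in (0:ℝ)..τ, f (g s) with hφ_def
  have hφ : ∀ τ, HasDerivAt φ (f (g τ)) τ := fun τ =>
    ((f.continuous.comp hg).integral_hasStrictDerivAt 0 τ).hasDerivAt
  have hφ_zero : Set.EqOn φ (fun _ => 0) (Set.Icc 0 t) :=
    ODE_solution_unique (v := fun _ => f) (K := ‖f‖₊) (fun _ => f.lipschitz)
      (fun τ _ => (hφ τ).continuousAt.continuousWithinAt)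
      (fun τ hτ => by rw [show φ τ = g τ from (hgeq τ hτ.1).symm]; exact (hφ τ).hasDerivWithinAt)
      continuousOn_const
      (fun τ _ => by simpa using hasDerivWithinAt_const τ (Set.Ici τ) (0 : E))
      (by simp [hφ_def])
  rw [hgeq t ht]
  exact hφ_zero ⟨ht, le_rfl⟩

lemma eqOn_Ici_of_eq_integral (f : E →L[ℝ] E) {w : ℝ → E}
    (hw : ∀ t, IntervalIntegrable w volume 0 t) {y z : ℝ → E} {y0 : E}
    (hy : Continuous y) (hz : Continuous z)
    (hyeq : ∀ t, 0 ≤ t → y t = y0 + ∫ s in (0:ℝ)..t, (f (y s) + w s))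
    (hzeq : ∀ t, 0 ≤ t → z t = y0 + ∫ s in (0:ℝ)..t, (f (z s) + w s)) :
    ∀ t, 0 ≤ t → y t = z t := by
  have hdiff : ∀ t, 0 ≤ t → y t - z t = ∫ s in (0:ℝ)..t, f (y s - z s) := by
    intro t ht
    have hfy : Continuous fun s => f (y s) := by fun_prop
    have hfz : Continuous fun s => f (z s) := by fun_prop
    rw [hyeq t ht, hzeq t ht, add_sub_add_left_eq_sub, ← intervalIntegral.integral_sub
      ((hfy.intervalIntegrable _ _).add (hw t)) ((hfz.intervalIntegrable _ _).add (hw t))]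
    simp only [map_sub, add_sub_add_right_eq_sub]
  exact fun t ht => sub_eq_zero.1 (eq_zero_of_eq_integral f (hy.sub hz) hdiff t ht)

end IntegralEquation

section LinearSystem

variable {ι ι' κ : Type*} [Fintype ι] [Fintype ι'] [Fintype κ]

lemma IntervalIntegrable.matrix_mulVec (C : Matrix ι' ι ℝ) {f : ℝ → ι → ℝ} {a b : ℝ}
    (hf : IntervalIntegrable f volume a b) :
    IntervalIntegrable (fun s => C *ᵥ f s) volume a b :=
  ⟨(LinearMap.toContinuousLinearMap C.mulVecLin).integrable_comp hf.1,
    (LinearMap.toContinuousLinearMap C.mulVecLin).integrable_comp hf.2⟩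

lemma Matrix.mulVec_intervalIntegral (C : Matrix ι' ι ℝ) {f : ℝ → ι → ℝ} {a b : ℝ}
    (hf : IntervalIntegrable f volume a b) :
    C *ᵥ (∫ s in a..b, f s) = ∫ s in a..b, C *ᵥ f s :=
  ((LinearMap.toContinuousLinearMap C.mulVecLin).intervalIntegral_comp_comm hf).symm

lemma mulVec_trajectory_eq_of_mul_eq {A : Matrix ι ι ℝ} {B : Matrix ι κ ℝ} {P : Matrix ι' ι ℝ}
    {Ahat : Matrix ι' ι' ℝ} (hPA : P * A = Ahat * P) {u : ℝ → κ → ℝ}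
    (hu : ∀ t, IntervalIntegrable u volume 0 t) {w : ℝ → ι' → ℝ}
    (hw : ∀ t, (P * B) *ᵥ u t = w t) {x0 : ι → ℝ} {x : ℝ → ι → ℝ} (hx : Continuous x)
    (hxeq : ∀ t, 0 ≤ t → x t = x0 + ∫ s in (0:ℝ)..t, (A *ᵥ x s + B *ᵥ u s))
    {z : ℝ → ι' → ℝ} (hz : Continuous z)
    (hzeq : ∀ t, 0 ≤ t → z t = P *ᵥ x0 + ∫ s in (0:ℝ)..t, (Ahat *ᵥ z s + w s)) :
    ∀ t, 0 ≤ t → P *ᵥ x t = z t := by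
  have hw_int : ∀ t, IntervalIntegrable w volume 0 t := fun t => by
    simpa only [hw] using (hu t).matrix_mulVec (P * B)
  refine eqOn_Ici_of_eq_integral (LinearMap.toContinuousLinearMap Ahat.mulVecLin) hw_int
    (continuous_const.matrix_mulVec hx) hz (fun t ht => ?_) hzeq
  have hAx : Continuous fun s => A *ᵥ x s := continuous_const.matrix_mulVec hx
  rw [hxeq t ht, Matrix.mulVec_add, Matrix.mulVec_intervalIntegral P
    ((hAx.intervalIntegrable 0 t).add ((hu t).matrix_mulVec B))]
  congr 1
  refine intervalIntegral.integral_congr fun s _ => ?_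
  simp only [LinearMap.coe_toContinuousLinearMap', Matrix.mulVecLin_apply, Matrix.mulVec_add,
    Matrix.mulVec_mulVec, hPA, ← hw s]

end LinearSystem

theorem optimality_preservation_part2_general {N n K : ℕ} (π : Fin N → Fin n)
    (A : Matrix (Fin N) (Fin N) ℝ)
    (hCE : aggL π * A = aggL π * A * avgL π * aggL π)
    (d : Fin K → Fin N)
    (B : Matrix (Fin N) (Fin K) ℝ)
    (hB : ∀ (j : Fin N) (l : Fin K), B j l = if j = d l then 1 else 0)
    (m M : Fin K → ℝ) (hmM : ∀ l, m l ≤ M l)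
    (F : (Fin N → ℝ) → ℝ) (R : ℝ → (Fin N → ℝ) → (Fin K → ℝ) → ℝ)
    (Fhat : (Fin n → ℝ) → ℝ) (Rhat : ℝ → (Fin n → ℝ) → (Fin n → ℝ) → ℝ)
    (hFhat : ∀ x : Fin N → ℝ, F x = Fhat ((aggL π).mulVec x))
    (hRhat : ∀ (t : ℝ) (x : Fin N → ℝ) (v : Fin K → ℝ),
      R t x v = Rhat t ((aggL π).mulVec x) ((aggL π * B).mulVec v))
    (x0 : Fin N → ℝ)
    -- the reduced admissible pair `(û, ẑ)` from `L·x0`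
    (uhat : ℝ → Fin n → ℝ) (huhat : Measurable uhat)
    (huhatbox : ∀ t : ℝ, ∀ i : Fin n,
      redBound π d m i ≤ uhat t i ∧ uhat t i ≤ redBound π d M i)
    (zhat : ℝ → Fin n → ℝ) (hzhat : Continuous zhat)
    (hzhateq : ∀ t : ℝ, 0 ≤ t →
      zhat t = (aggL π).mulVec x0 +
        ∫ s in (0:ℝ)..t, ((aggL π * A * avgL π).mulVec (zhat s) + uhat s))
    -- the disaggregated control `u`
    (u : ℝ → Fin K → ℝ)
    (hu_def : ∀ (t : ℝ) (l : Fin K), u t l =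
      if redBound π d m (π (d l)) < redBound π d M (π (d l)) then
        m l + ((M l - m l) / (redBound π d M (π (d l)) - redBound π d m (π (d l)))) *
          (uhat t (π (d l)) - redBound π d m (π (d l)))
      else m l) :
    Measurable u ∧
    (∀ t : ℝ, ∀ l : Fin K, m l ≤ u t l ∧ u t l ≤ M l) ∧
    (∀ t : ℝ, (aggL π * B).mulVec (u t) = uhat t) ∧
    (∀ x : ℝ → Fin N → ℝ, Continuous x →
      (∀ t : ℝ, 0 ≤ t →
        x t = x0 + ∫ s in (0:ℝ)..t, (A.mulVec (x s) + B.mulVec (u s))) →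
      (∀ t : ℝ, 0 ≤ t → (aggL π).mulVec (x t) = zhat t) ∧
      (∀ T : ℝ, 0 ≤ T →
        F (x T) + (∫ t in (0:ℝ)..T, R t (x t) (u t)) =
          Fhat (zhat T) + ∫ t in (0:ℝ)..T, Rhat t (zhat t) (uhat t))) := by
  have hu : u = fun t => disaggregate (π ∘ d) m M (uhat t) := funext fun t => funext (hu_def t)
  have huhat_mem : ∀ t, uhat t ∈ Set.Icc (fiberSum (π ∘ d) m) (fiberSum (π ∘ d) M) :=
    fun t => ⟨fun i => (huhatbox t i).1, fun i => (huhatbox t i).2⟩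
  have hu_mem : ∀ t, u t ∈ Set.Icc m M := fun t => hu ▸ disaggregate_mem_Icc _ hmM (huhat_mem t)
  have hu_meas : Measurable u := hu ▸ (continuous_disaggregate _ m M).measurable.comp huhat
  have hLBu : ∀ t, (aggL π * B) *ᵥ u t = uhat t := fun t => by
    rw [aggL_mul_mulVec_of_unit_columns π hB, hu, fiberSum_disaggregate _ (huhat_mem t)]
  refine ⟨hu_meas, fun t l => ⟨(hu_mem t).1 l, (hu_mem t).2 l⟩, hLBu, fun x hx hxeq => ?_⟩
  have hLx : ∀ t, 0 ≤ t → aggL π *ᵥ x t = zhat t :=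
    mulVec_trajectory_eq_of_mul_eq hCE (fun t => hu_meas.intervalIntegrable_of_mem_Icc hu_mem 0 t)
      hLBu hx hxeq hzhat hzhateq
  refine ⟨hLx, fun T hT => ?_⟩
  rw [hFhat, hLx T hT]
  congr 1
  refine intervalIntegral.integral_congr fun t ht => ?_
  rw [Set.uIcc_of_le hT] at ht
  simp only [hRhat, hLBu, hLx t ht.1]

/-- Theorem 1, part 2: from a reduced admissible pair `(û, ẑ)` one recovers, via the
affine disaggregation formula, an admissible control `u` of the original system with
`(L·B)·u = û`, whose trajectory lumps onto `ẑ` and attains the same cost. -/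
theorem optimality_preservation_part2 {N n K : ℕ} (π : Fin N → Fin n)
    (hπ : Function.Surjective π) (A : Matrix (Fin N) (Fin N) ℝ)
    (hCE : aggL π * A = aggL π * A * avgL π * aggL π)
    (d : Fin K → Fin N) (hd : Function.Injective d)
    (B : Matrix (Fin N) (Fin K) ℝ)
    (hB : ∀ (j : Fin N) (l : Fin K), B j l = if j = d l then 1 else 0)
    (m M : Fin K → ℝ) (hmM : ∀ l, m l ≤ M l)
    (F : (Fin N → ℝ) → ℝ) (R : ℝ → (Fin N → ℝ) → (Fin K → ℝ) → ℝ)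
    (Fhat : (Fin n → ℝ) → ℝ) (Rhat : ℝ → (Fin n → ℝ) → (Fin n → ℝ) → ℝ)
    (hFhat : ∀ x : Fin N → ℝ, F x = Fhat ((aggL π).mulVec x))
    (hRhat : ∀ (t : ℝ) (x : Fin N → ℝ) (v : Fin K → ℝ),
      R t x v = Rhat t ((aggL π).mulVec x) ((aggL π * B).mulVec v))
    (x0 : Fin N → ℝ)
    -- the reduced admissible pair `(û, ẑ)` from `L·x0`
    (uhat : ℝ → Fin n → ℝ) (huhat : Measurable uhat)
    (huhatbox : ∀ t : ℝ, ∀ i : Fin n,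
      redBound π d m i ≤ uhat t i ∧ uhat t i ≤ redBound π d M i)
    (zhat : ℝ → Fin n → ℝ) (hzhat : Continuous zhat)
    (hzhateq : ∀ t : ℝ, 0 ≤ t →
      zhat t = (aggL π).mulVec x0 +
        ∫ s in (0:ℝ)..t, ((aggL π * A * avgL π).mulVec (zhat s) + uhat s))
    -- the disaggregated control `u`
    (u : ℝ → Fin K → ℝ)
    (hu_def : ∀ (t : ℝ) (l : Fin K), u t l =
      if redBound π d m (π (d l)) < redBound π d M (π (d l)) then
        m l + ((M l - m l) / (redBound π d M (π (d l)) - redBound π d m (π (d l)))) *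
          (uhat t (π (d l)) - redBound π d m (π (d l)))
      else m l) :
    Measurable u ∧
    (∀ t : ℝ, ∀ l : Fin K, m l ≤ u t l ∧ u t l ≤ M l) ∧
    (∀ t : ℝ, (aggL π * B).mulVec (u t) = uhat t) ∧
    (∀ x : ℝ → Fin N → ℝ, Continuous x →
      (∀ t : ℝ, 0 ≤ t →
        x t = x0 + ∫ s in (0:ℝ)..t, (A.mulVec (x s) + B.mulVec (u s))) →
      (∀ t : ℝ, 0 ≤ t → (aggL π).mulVec (x t) = zhat t) ∧
      (∀ T : ℝ, 0 ≤ T →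
        F (x T) + (∫ t in (0:ℝ)..T, R t (x t) (u t)) =
          Fhat (zhat T) + ∫ t in (0:ℝ)..T, Rhat t (zhat t) (uhat t))) :=
  optimality_preservation_part2_general π A hCE d B hB m M hmM F R Fhat Rhat hFhat hRhat x0 uhat
    huhat huhatbox zhat hzhat hzhateq u hu_def
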